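/- arXiv:2507.04064 — 4 statements merged into one kernel-verified Lean document; each statement's English description precedes it below -/
import Mathlib

section
/- Let n ∈ ℕ with n ≥ 1, k ∈ ℝ with k ≥ 0, and let f ∈ D_{k,n}(ℝ) satisfy supp(f) ⊆ [−R, R] for some R > 0. Then for all α, β, m ∈ ℕ₀ one has P_{α,β}(f_m) ≤ n^α R^{2α/n} P_{0,β}(f_m), where f_m is the sequence of functions associated to f. (This is the quantitative form of the continuity of the embedding D_{k,n}(ℝ) ↪ S_{k,n}(ℝ).) -/
open MeasureTheory Real
open scoped ENNReal NNReal

noncomputable section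

/-- One-dimensional Dunkl Laplacian. -/
def dunkl (k : ℝ) (f : ℝ → ℂ) (x : ℝ) : ℂ :=
  deriv (deriv f) x + ((2 * k / x : ℝ) : ℂ) * deriv f x
    - (k : ℂ) * (f x - f (-x)) / (x : ℂ) ^ 2

/-- The operator `g ↦ |x| ^ (2 - 2/n) * (Δ_k g) x`. -/
def Lop (k : ℝ) (n : ℕ) (f : ℝ → ℂ) (x : ℝ) : ℂ :=
  ((|x| ^ (2 - 2 / (n : ℝ)) : ℝ) : ℂ) * dunkl k f x

/-- The operator `g ↦ n * |x| ^ (2 - 2/n) * (Δ_k g) x`. -/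
def nLop (k : ℝ) (n : ℕ) (f : ℝ → ℂ) (x : ℝ) : ℂ :=
  (((n : ℝ) * |x| ^ (2 - 2 / (n : ℝ)) : ℝ) : ℂ) * dunkl k f x

/-- Membership in `D_{k,n}(ℝ)`: smooth off the origin, bounded support, and the
corresponding seminorm bounds. -/
def memDkn (k : ℝ) (n : ℕ) (f : ℝ → ℂ) : Prop :=
  ContDiffOn ℝ (⊤ : ℕ∞) f {(0 : ℝ)}ᶜ ∧
  Bornology.IsBounded (Function.support f) ∧
  ∀ β ℓ : ℕ, ∃ C : ℝ, ∀ x : ℝ, x ≠ 0 →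
    ‖(Lop k n)^[β] (fun t : ℝ => (t : ℂ) ^ ℓ * iteratedDeriv ℓ f t) x‖ ≤ C

/-- The seminorm `P_{α,β}(g) = sup_{x ≠ 0} |(n|x|^{2/n})^α ((n|x|^{2-2/n}Δ_k)^β g)(x)|`,
valued in `ℝ≥0∞`. -/
def Pnorm (k : ℝ) (n : ℕ) (α β : ℕ) (g : ℝ → ℂ) : ℝ≥0∞ :=
  ⨆ x : {x : ℝ // x ≠ 0},
    (‖((((n : ℝ) * |x.1| ^ (2 / (n : ℝ))) ^ α : ℝ) : ℂ) * (nLop k n)^[β] g x.1‖₊ : ℝ≥0∞)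

/-- Stirling numbers of the second kind:
`S(0,0) = 1`, `S(ℓ,0) = 0` for `ℓ ≥ 1`, `S(ℓ,j) = j S(ℓ-1,j) + S(ℓ-1,j-1)`. -/
def stirling2 : ℕ → ℕ → ℕ
  | 0, 0 => 1
  | 0, _ + 1 => 0
  | _ + 1, 0 => 0
  | l + 1, j + 1 => (j + 1) * stirling2 l (j + 1) + stirling2 l j

/-- The sequence of functions `f_m` associated to `f`:
`f_m(x) = Σ_{ℓ=0}^m Σ_{j=0}^ℓ C(m,ℓ) (kn+1-n/2)^{m-ℓ} n^ℓ S(ℓ,j) x^j f^{(j)}(x)`. -/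
def fseq (k : ℝ) (n : ℕ) (f : ℝ → ℂ) (m : ℕ) (x : ℝ) : ℂ :=
  ∑ ℓ ∈ Finset.range (m + 1), ∑ j ∈ Finset.range (ℓ + 1),
    (((m.choose ℓ : ℝ) * (k * n + 1 - (n : ℝ) / 2) ^ (m - ℓ) * (n : ℝ) ^ ℓ *
      (stirling2 ℓ j : ℝ) : ℝ) : ℂ) * (x : ℂ) ^ j * iteratedDeriv j f x

/-- Quantitative continuity of the embedding `D_{k,n}(ℝ) ↪ S_{k,n}(ℝ)`:
for `f ∈ D_{k,n}(ℝ)` supported in `[-R, R]`, one has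
`P_{α,β}(f_m) ≤ n^α R^{2α/n} P_{0,β}(f_m)`. -/
theorem Dkn_embedding_quantitative (n : ℕ) (hn : 1 ≤ n) (k : ℝ) (hk : 0 ≤ k)
    (f : ℝ → ℂ) (R : ℝ) (hR : 0 < R) (hf : memDkn k n f)
    (hsupp : Function.support f ⊆ Set.Icc (-R) R) :
    ∀ α β m : ℕ, Pnorm k n α β (fseq k n f m) ≤
      ENNReal.ofReal ((n : ℝ) ^ α * R ^ (2 * (α : ℝ) / (n : ℝ))) *
        Pnorm k n 0 β (fseq k n f m) := by
  intro α β m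
  set g := fseq k n f m with hg
  set U : Set ℝ := {t : ℝ | R < |t|} with hUdef
  have hUopen : IsOpen U := isOpen_lt continuous_const continuous_abs
  have hderiv : ∀ (h : ℝ → ℂ), (∀ y ∈ U, h y = 0) → ∀ x ∈ U, deriv h x = 0 := by
    intro h hh x hx
    have he : h =ᶠ[nhds x] (fun _ => (0 : ℂ)) :=
      Filter.eventuallyEq_of_mem (hUopen.mem_nhds hx) hh
    rw [he.deriv_eq]; simp
  have hfU : ∀ x ∈ U, f x = 0 := by
    intro x hx
    by_contra hne
    have hmem : x ∈ Function.support f := hne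
    have h2 := hsupp hmem
    rw [Set.mem_Icc] at h2
    have : |x| ≤ R := abs_le.mpr h2
    exact absurd hx (by simpa [hUdef] using not_lt.mpr this)
  have hiter : ∀ j : ℕ, ∀ x ∈ U, iteratedDeriv j f x = 0 := by
    intro j
    induction j with
    | zero => simpa using hfU
    | succ j ih =>
      intro x hx
      rw [iteratedDeriv_succ]
      exact hderiv _ ih x hx
  have hgU : ∀ x ∈ U, g x = 0 := by
    intro x hx
    simp only [hg, fseq]
    refine Finset.sum_eq_zero fun ℓ _ => Finset.sum_eq_zero fun j _ => ?_
    rw [hiter j x hx, mul_zero]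
  have hsymU : ∀ x ∈ U, -x ∈ U := by
    intro x hx; simpa [hUdef, abs_neg] using hx
  have hnLop : ∀ h : ℝ → ℂ, (∀ y ∈ U, h y = 0) → ∀ x ∈ U, nLop k n h x = 0 := by
    intro h hh x hx
    have h1 : deriv h x = 0 := hderiv h hh x hx
    have h2 : deriv (deriv h) x = 0 :=
      hderiv _ (fun y hy => hderiv h hh y hy) x hx
    simp [nLop, dunkl, h1, h2, hh x hx, hh (-x) (hsymU x hx)]
  have hiterL : ∀ b : ℕ, ∀ x ∈ U, (nLop k n)^[b] g x = 0 := by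
    intro b
    induction b with
    | zero => simpa using hgU
    | succ b ih =>
      rw [Function.iterate_succ_apply']
      exact fun x hx => hnLop _ ih x hx
  have hnpos : (0 : ℝ) < n := by exact_mod_cast Nat.lt_of_lt_of_le Nat.zero_lt_one hn
  rw [Pnorm]
  apply iSup_le
  rintro ⟨x, hx⟩
  by_cases hxR : R < |x|
  · simp [hiterL β x hxR]
  · push_neg at hxR
    have hterm : (‖(nLop k n)^[β] g x‖₊ : ℝ≥0∞) ≤ Pnorm k n 0 β g := by
      have h := le_iSup (fun y : {x : ℝ // x ≠ 0} =>
        (‖((((n : ℝ) * |y.1| ^ (2 / (n : ℝ))) ^ (0 : ℕ) : ℝ) : ℂ) *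
          (nLop k n)^[β] g y.1‖₊ : ℝ≥0∞)) ⟨x, hx⟩
      simpa [Pnorm] using h
    set c : ℝ := ((n : ℝ) * |x| ^ (2 / (n : ℝ))) ^ α with hc
    have hc0 : 0 ≤ c := by positivity
    have hcoe : (‖((c : ℝ) : ℂ) * (nLop k n)^[β] g x‖₊ : ℝ≥0∞)
        = ENNReal.ofReal c * (‖(nLop k n)^[β] g x‖₊ : ℝ≥0∞) := by
      rw [nnnorm_mul, ENNReal.coe_mul, ← (ofReal_norm (((c : ℝ) : ℂ))).trans (enorm_eq_nnnorm _)]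
      congr 1
      rw [Complex.norm_real, Real.norm_eq_abs, abs_of_nonneg hc0]
    have hcle : c ≤ (n : ℝ) ^ α * R ^ (2 * (α : ℝ) / (n : ℝ)) := by
      rw [hc, mul_pow]
      refine mul_le_mul_of_nonneg_left ?_ (by positivity)
      have h1 : (|x| ^ (2 / (n : ℝ))) ^ α = |x| ^ ((2 / (n : ℝ)) * α) := by
        rw [← Real.rpow_natCast (|x| ^ (2 / (n : ℝ))) α, ← Real.rpow_mul (abs_nonneg x)]
      have h2 : R ^ (2 * (α : ℝ) / (n : ℝ)) = R ^ ((2 / (n : ℝ)) * α) := by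
        ring_nf
      rw [h1, h2]
      exact Real.rpow_le_rpow (abs_nonneg x) hxR (by positivity)
    calc (‖((c : ℝ) : ℂ) * (nLop k n)^[β] g x‖₊ : ℝ≥0∞)
        = ENNReal.ofReal c * (‖(nLop k n)^[β] g x‖₊ : ℝ≥0∞) := hcoe
      _ ≤ ENNReal.ofReal ((n : ℝ) ^ α * R ^ (2 * (α : ℝ) / (n : ℝ))) *
            Pnorm k n 0 β g :=
          mul_le_mul' (ENNReal.ofReal_le_ofReal hcle) hterm

end
end

section
/- Let n ∈ ℕ with n ≥ 1 and k ∈ ℝ with k ≥ 0. For every f ∈ C^∞(ℝ∖{0}), every β ∈ ℕ₀ and every x ∈ ℝ∖{0}, one has n|x|^{2−2/n} Δ_k( (n|x|^{2/n})^β f(x) ) = 4β (n|x|^{2/n})^{β−1} ( (β−1) f(x) + (H_{k,n} f)(x) ) + (n|x|^{2/n})^β ( n|x|^{2−2/n} (Δ_k f)(x) ), where the Dunkl Laplacian on the left acts on the function x ↦ (n|x|^{2/n})^β f(x). -/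
open MeasureTheory Real
open scoped ENNReal NNReal

noncomputable section

/-- The operator `H_{k,n} : f ↦ n x f'(x) + (kn + 1 - n/2) f(x)`. -/
def Hop (k : ℝ) (n : ℕ) (f : ℝ → ℂ) (x : ℝ) : ℂ :=
  (((n : ℝ) * x : ℝ) : ℂ) * deriv f x + ((k * n + 1 - (n : ℝ) / 2 : ℝ) : ℂ) * f x

def Afun (n : ℕ) : ℝ → ℝ := fun t => (n : ℝ) * (t ^ 2) ^ (1 / (n : ℝ) : ℝ)

lemma Afun_eq (n : ℕ) (t : ℝ) : (n : ℝ) * |t| ^ (2 / (n : ℝ)) = Afun n t := by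
  unfold Afun
  congr 1
  rw [div_eq_mul_one_div, Real.rpow_mul (abs_nonneg t),
    show ((2:ℝ) = ((2:ℕ):ℝ)) by norm_num, Real.rpow_natCast, sq_abs]

lemma Afun_pos (n : ℕ) (hn : 1 ≤ n) {t : ℝ} (ht : t ≠ 0) : 0 < Afun n t := by
  have : (0:ℝ) < n := by exact_mod_cast hn
  have h2 : (0:ℝ) < t ^ 2 := by positivity
  exact mul_pos this (Real.rpow_pos_of_pos h2 _)

lemma Afun_neg (n : ℕ) (t : ℝ) : Afun n (-t) = Afun n t := by
  simp [Afun, neg_sq]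

lemma hasDerivAt_Afun (n : ℕ) (hn : 1 ≤ n) {t : ℝ} (ht : t ≠ 0) :
    HasDerivAt (Afun n) (2 * Afun n t / ((n : ℝ) * t)) t := by
  have hn0 : (n:ℝ) ≠ 0 := by positivity
  have h1 : HasDerivAt (fun s : ℝ => s ^ 2) (2 * t) t := by
    simpa using hasDerivAt_pow 2 t
  have h2 := (h1.rpow_const (p := 1 / (n:ℝ)) (Or.inl (pow_ne_zero 2 ht))).const_mul ((n:ℝ))
  refine h2.congr_deriv (Eq.symm ?_)
  have h3 : (t^2) ^ (1/(n:ℝ) - 1) = (t^2) ^ (1/(n:ℝ)) / (t^2) := by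
    rw [Real.rpow_sub (by positivity), Real.rpow_one]
  rw [h3]; unfold Afun; field_simp

lemma hasDerivAt_pow_Afun (n : ℕ) (hn : 1 ≤ n) (β : ℕ) {t : ℝ} (ht : t ≠ 0) :
    HasDerivAt (fun s => Afun n s ^ β) ((2 * (β:ℝ) * Afun n t ^ β) / ((n : ℝ) * t)) t := by
  have hn0 : (n:ℝ) ≠ 0 := by positivity
  have h := (hasDerivAt_Afun n hn ht).pow β
  refine h.congr_deriv (Eq.symm ?_)
  rcases β with _ | m
  · simp
  · rw [pow_succ, Nat.add_sub_cancel]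
    push_cast
    field_simp

lemma M_eq (n : ℕ) (hn : 1 ≤ n) {x : ℝ} (hx : x ≠ 0) :
    (n : ℝ) * |x| ^ (2 - 2 / (n : ℝ)) = (n:ℝ)^2 * x^2 / Afun n x := by
  have hax : (0:ℝ) < |x| := abs_pos.mpr hx
  have hn0 : (n:ℝ) ≠ 0 := by positivity
  rw [Real.rpow_sub hax, ← Afun_eq,
    show ((2:ℝ) = ((2:ℕ):ℝ)) by norm_num, Real.rpow_natCast, sq_abs]
  have hpow : |x| ^ ((((2:ℕ):ℝ)) / (n:ℝ)) ≠ 0 := ne_of_gt (Real.rpow_pos_of_pos hax _)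
  field_simp


set_option maxHeartbeats 1000000 in
/-- The recursion formula:
`n|x|^{2-2/n} Δ_k((n|x|^{2/n})^β f) = 4β (n|x|^{2/n})^{β-1}((β-1) f + H_{k,n} f)
  + (n|x|^{2/n})^β (n|x|^{2-2/n} Δ_k f)`. -/
theorem nLop_pow_mul (n : ℕ) (hn : 1 ≤ n) (k : ℝ) (hk : 0 ≤ k)
    (f : ℝ → ℂ) (hf : ContDiffOn ℝ (⊤ : ℕ∞) f {(0 : ℝ)}ᶜ) (β : ℕ) (x : ℝ) (hx : x ≠ 0) :
    nLop k n (fun t : ℝ => (((((n : ℝ) * |t| ^ (2 / (n : ℝ))) ^ β : ℝ)) : ℂ) * f t) x =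
      4 * (β : ℂ) * (((((n : ℝ) * |x| ^ (2 / (n : ℝ))) ^ (β - 1) : ℝ)) : ℂ) *
          (((β : ℂ) - 1) * f x + Hop k n f x) +
        (((((n : ℝ) * |x| ^ (2 / (n : ℝ))) ^ β : ℝ)) : ℂ) * nLop k n f x := by
  simp only [Afun_eq]
  rcases Nat.eq_zero_or_pos β with hβ0 | hβ0
  · subst hβ0
    simp only [pow_zero, Complex.ofReal_one, one_mul, Nat.cast_zero, mul_zero, zero_mul,
      zero_add]
  · obtain ⟨m, rfl⟩ : ∃ m, β = m + 1 := ⟨β - 1, (Nat.succ_pred_eq_of_pos hβ0).symm⟩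
    have hn0 : (n:ℝ) ≠ 0 := by positivity
    have hA : Afun n x ≠ 0 := ne_of_gt (Afun_pos n hn hx)
    have hf1 : ∀ t : ℝ, t ≠ 0 → HasDerivAt f (deriv f t) t := fun t ht =>
      ((hf.contDiffAt (isOpen_compl_singleton.mem_nhds ht)).differentiableAt (by simp)).hasDerivAt
    have hf' : ContDiffOn ℝ (⊤ : ℕ∞) (deriv f) {(0:ℝ)}ᶜ :=
      hf.deriv_of_isOpen isOpen_compl_singleton (by simp)
    have hf2 : ∀ t : ℝ, t ≠ 0 → HasDerivAt (deriv f) (deriv (deriv f) t) t := fun t ht =>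
      ((hf'.contDiffAt (isOpen_compl_singleton.mem_nhds ht)).differentiableAt (by simp)).hasDerivAt
    set β := m + 1 with hβ
    have hg1 : ∀ t : ℝ, t ≠ 0 →
        HasDerivAt (fun t : ℝ => ((Afun n t ^ β : ℝ) : ℂ) * f t)
          (((2 * (β:ℝ) * Afun n t ^ β / ((n:ℝ) * t) : ℝ) : ℂ) * f t
            + ((Afun n t ^ β : ℝ) : ℂ) * deriv f t) t := fun t ht =>
      ((hasDerivAt_pow_Afun n hn β ht).ofReal_comp).mul (hf1 t ht)
    have hEq : deriv (fun t : ℝ => ((Afun n t ^ β : ℝ) : ℂ) * f t)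
        =ᶠ[nhds x] fun t : ℝ => ((2 * (β:ℝ) * Afun n t ^ β / ((n:ℝ) * t) : ℝ) : ℂ) * f t
            + ((Afun n t ^ β : ℝ) : ℂ) * deriv f t := by
      filter_upwards [isOpen_compl_singleton.mem_nhds hx] with t ht
      exact (hg1 t ht).deriv
    have hw1 : HasDerivAt (fun t : ℝ => 2 * (β:ℝ) * Afun n t ^ β / ((n:ℝ) * t))
        ((2*(β:ℝ)/(n:ℝ)) * (2*(β:ℝ)/(n:ℝ) - 1) * Afun n x ^ β / x^2) x := by
      have hu := (hasDerivAt_pow_Afun n hn β hx).const_mul (2 * (β:ℝ))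
      have hv : HasDerivAt (fun t : ℝ => (n:ℝ) * t) ((n:ℝ) * 1) x :=
        (hasDerivAt_id x).const_mul ((n:ℝ))
      have := hu.div hv (by simp [hn0, hx])
      refine this.congr_deriv (Eq.symm ?_)
      field_simp
    have h2nd : HasDerivAt (fun t : ℝ =>
          ((2 * (β:ℝ) * Afun n t ^ β / ((n:ℝ) * t) : ℝ) : ℂ) * f t
            + ((Afun n t ^ β : ℝ) : ℂ) * deriv f t)
        ((((2*(β:ℝ)/(n:ℝ)) * (2*(β:ℝ)/(n:ℝ) - 1) * Afun n x ^ β / x^2 : ℝ) : ℂ) * f x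
          + ((2 * (β:ℝ) * Afun n x ^ β / ((n:ℝ) * x) : ℝ) : ℂ) * deriv f x
          + (((2 * (β:ℝ) * Afun n x ^ β / ((n:ℝ) * x) : ℝ) : ℂ) * deriv f x
            + ((Afun n x ^ β : ℝ) : ℂ) * deriv (deriv f) x)) x :=
      ((hw1.ofReal_comp).mul (hf1 x hx)).add
        (((hasDerivAt_pow_Afun n hn β hx).ofReal_comp).mul (hf2 x hx))
    have hd1 : deriv (fun t : ℝ => ((Afun n t ^ β : ℝ) : ℂ) * f t) x
        = ((2 * (β:ℝ) * Afun n x ^ β / ((n:ℝ) * x) : ℝ) : ℂ) * f x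
            + ((Afun n x ^ β : ℝ) : ℂ) * deriv f x := (hg1 x hx).deriv
    have hd2 : deriv (deriv (fun t : ℝ => ((Afun n t ^ β : ℝ) : ℂ) * f t)) x
        = (((2*(β:ℝ)/(n:ℝ)) * (2*(β:ℝ)/(n:ℝ) - 1) * Afun n x ^ β / x^2 : ℝ) : ℂ) * f x
          + ((2 * (β:ℝ) * Afun n x ^ β / ((n:ℝ) * x) : ℝ) : ℂ) * deriv f x
          + (((2 * (β:ℝ) * Afun n x ^ β / ((n:ℝ) * x) : ℝ) : ℂ) * deriv f x
            + ((Afun n x ^ β : ℝ) : ℂ) * deriv (deriv f) x) := by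
      rw [hEq.deriv_eq]
      exact h2nd.deriv
    unfold nLop dunkl Hop
    rw [hd1, hd2, M_eq n hn hx]
    simp only [hβ, Nat.add_sub_cancel, Afun_neg]
    have hX : (x:ℂ) ≠ 0 := by exact_mod_cast hx
    have hN : ((n:ℕ):ℂ) ≠ 0 := by exact_mod_cast hn0
    have hAc : ((Afun n x : ℝ):ℂ) ≠ 0 := by exact_mod_cast hA
    push_cast
    set F := f x
    set Fm := f (-x)
    set F' := deriv f x
    set F'' := deriv (deriv f) x
    set A := ((Afun n x : ℝ) : ℂ)
    set X := ((x:ℝ) : ℂ)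
    set N := ((n:ℕ) : ℂ)
    set K := ((k:ℝ) : ℂ)
    set b := ((m:ℕ) : ℂ)
    clear_value F Fm F' F'' A X N K b
    have e1 : N^2*X^2/A * (2*(b+1)/N * (2*(b+1)/N - 1) * A^(m+1)/X^2)
        = 2*(b+1)*(2*(b+1)-N)*A^m := by
      rw [pow_succ]; field_simp; ring
    have e2 : N^2*X^2/A * (2*(b+1)*A^(m+1)/(N*X)) = 2*(b+1)*N*X*A^m := by
      rw [pow_succ]; field_simp; ring
    have e4 : N^2*X^2/A * (2*K/X * (2*(b+1)*A^(m+1)/(N*X))) = 4*(b+1)*K*N*A^m := by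
      rw [pow_succ]; field_simp; ring
    linear_combination F*e1 + 2*F'*e2 + F*e4


end
end

section
/- Let n ∈ ℕ with n ≥ 1 and k ∈ ℝ with k ≥ 0, and let f ∈ C^∞(ℝ∖{0}). Then f ∈ S_{k,n}(ℝ) if and only if P_{α,β}(f_m) < ∞ for all α, β, m ∈ ℕ₀, where f_m is the sequence of functions associated to f. -/
open MeasureTheory Real
open scoped ENNReal NNReal

noncomputable section

/-- Membership in the generalized Schwartz space `S_{k,n}(ℝ)`. -/
def memSkn (k : ℝ) (n : ℕ) (f : ℝ → ℂ) : Prop :=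
  ContDiffOn ℝ (⊤ : ℕ∞) f {(0 : ℝ)}ᶜ ∧
  ∀ α β ℓ : ℕ, ∃ C : ℝ, ∀ x : ℝ, x ≠ 0 →
    ‖(((|x| ^ (2 / (n : ℝ)) : ℝ) ^ α : ℝ) : ℂ) *
      (Lop k n)^[β] (fun t : ℝ => (t : ℂ) ^ ℓ * iteratedDeriv ℓ f t) x‖ ≤ C

/-! ### Auxiliary lemmas -/

lemma isOpenC : IsOpen ({(0:ℝ)}ᶜ) := isOpen_compl_singleton

lemma negmem : ∀ y ∈ ({(0:ℝ)}ᶜ : Set ℝ), -y ∈ ({(0:ℝ)}ᶜ : Set ℝ) := fun y hy => by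
  simpa using (hy : y ≠ 0)

lemma einf : ((⊤:ℕ∞) : WithTop ℕ∞) + 1 ≤ ((⊤:ℕ∞) : WithTop ℕ∞) := by simp

lemma eone : (1 : WithTop ℕ∞) ≤ ((⊤:ℕ∞) : WithTop ℕ∞) := by simp

lemma dunkl_const_mul (k : ℝ) (c : ℂ) (g : ℝ → ℂ) (x : ℝ) :
    dunkl k (fun y => c * g y) x = c * dunkl k g x := by
  unfold dunkl
  rw [deriv_const_mul_field' c, deriv_const_mul_field' c]
  simp only [deriv_const_mul_field]
  ring

lemma Lop_const_mul (k : ℝ) (n : ℕ) (c : ℂ) (g : ℝ → ℂ) :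
    Lop k n (fun y => c * g y) = fun x => c * Lop k n g x := by
  funext x; unfold Lop; rw [dunkl_const_mul]; ring

lemma Lop_iter_const_mul (k : ℝ) (n : ℕ) (β : ℕ) (c : ℂ) (g : ℝ → ℂ) (x : ℝ) :
    (Lop k n)^[β] (fun y => c * g y) x = c * (Lop k n)^[β] g x := by
  induction β generalizing g x with
  | zero => rfl
  | succ β ih => rw [Function.iterate_succ_apply, Lop_const_mul, Function.iterate_succ_apply, ih]

lemma dunkl_congr {k : ℝ} {s : Set ℝ} (hs : IsOpen s) {g₁ g₂ : ℝ → ℂ}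
    (h : Set.EqOn g₁ g₂ s) (hneg : ∀ y ∈ s, -y ∈ s) {x : ℝ} (hx : x ∈ s) :
    dunkl k g₁ x = dunkl k g₂ x := by
  have hev : g₁ =ᶠ[nhds x] g₂ := Filter.eventuallyEq_of_mem (hs.mem_nhds hx) h
  unfold dunkl
  rw [hev.deriv.deriv_eq, hev.deriv_eq, h hx, h (hneg x hx)]

lemma Lop_iter_congr {k : ℝ} {n : ℕ} {s : Set ℝ} (hs : IsOpen s) (hneg : ∀ y ∈ s, -y ∈ s)
    (β : ℕ) {g₁ g₂ : ℝ → ℂ} (h : Set.EqOn g₁ g₂ s) :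
    Set.EqOn ((Lop k n)^[β] g₁) ((Lop k n)^[β] g₂) s := by
  induction β with
  | zero => exact h
  | succ β ih =>
    intro x hx
    rw [Function.iterate_succ_apply', Function.iterate_succ_apply']
    show ((|x| ^ (2 - 2 / (n:ℝ)) : ℝ) : ℂ) * dunkl k ((Lop k n)^[β] g₁) x
      = ((|x| ^ (2 - 2 / (n:ℝ)) : ℝ) : ℂ) * dunkl k ((Lop k n)^[β] g₂) x
    rw [dunkl_congr hs ih hneg hx]

lemma ofReal_contDiffOn {g : ℝ → ℝ} {s : Set ℝ} (h : ContDiffOn ℝ (⊤:ℕ∞) g s) :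
    ContDiffOn ℝ (⊤:ℕ∞) (fun x => ((g x : ℝ) : ℂ)) s :=
  Complex.ofRealCLM.contDiff.comp_contDiffOn h

lemma dunkl_contDiffOn {k : ℝ} {g : ℝ → ℂ} (hg : ContDiffOn ℝ (⊤:ℕ∞) g {(0:ℝ)}ᶜ) :
    ContDiffOn ℝ (⊤:ℕ∞) (dunkl k g) {(0:ℝ)}ᶜ := by
  have hd : ContDiffOn ℝ (⊤:ℕ∞) (deriv g) {(0:ℝ)}ᶜ :=
    hg.deriv_of_isOpen isOpenC einf
  have hdd : ContDiffOn ℝ (⊤:ℕ∞) (deriv (deriv g)) {(0:ℝ)}ᶜ :=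
    hd.deriv_of_isOpen isOpenC einf
  have hcoef : ContDiffOn ℝ (⊤:ℕ∞) (fun x : ℝ => ((2 * k / x : ℝ) : ℂ)) {(0:ℝ)}ᶜ :=
    ofReal_contDiffOn (contDiffOn_const.div contDiffOn_id fun x hx => hx)
  have hneg : ContDiffOn ℝ (⊤:ℕ∞) (fun x : ℝ => g (-x)) {(0:ℝ)}ᶜ := by
    exact hg.comp contDiff_neg.contDiffOn (fun x hx => by simpa using hx)
  have hquot : ContDiffOn ℝ (⊤:ℕ∞)
      (fun x : ℝ => (k : ℂ) * (g x - g (-x)) / (x:ℂ)^2) {(0:ℝ)}ᶜ := by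
    have heq : (fun x : ℝ => (k : ℂ) * (g x - g (-x)) / (x:ℂ)^2)
        = fun x : ℝ => (k : ℂ) * (g x - g (-x)) * ((((x^2)⁻¹ : ℝ)) : ℂ) := by
      funext x; push_cast; ring
    rw [heq]
    have hinv : ContDiffOn ℝ (⊤:ℕ∞) (fun x : ℝ => (x^2)⁻¹) {(0:ℝ)}ᶜ :=
      (contDiffOn_id.pow 2).inv fun x hx => pow_ne_zero 2 hx
    exact (contDiffOn_const.mul (hg.sub hneg)).mul (ofReal_contDiffOn hinv)
  exact (hdd.add (hcoef.mul hd)).sub hquot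

lemma Lop_contDiffOn {k : ℝ} {n : ℕ} {g : ℝ → ℂ} (hg : ContDiffOn ℝ (⊤:ℕ∞) g {(0:ℝ)}ᶜ) :
    ContDiffOn ℝ (⊤:ℕ∞) (Lop k n g) {(0:ℝ)}ᶜ := by
  have h1 : ContDiffOn ℝ (⊤:ℕ∞) (fun x : ℝ => |x| ^ (2 - 2/(n:ℝ))) {(0:ℝ)}ᶜ := by
    intro x hx
    have hx0 : x ≠ 0 := hx
    have habs : ContDiffAt ℝ (⊤:ℕ∞) (fun y : ℝ => |y|) x := by
      rcases lt_or_gt_of_ne hx0 with h | h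
      · exact (contDiffAt_id.neg).congr_of_eventuallyEq
          (by filter_upwards [eventually_lt_nhds h] with y hy using abs_of_neg hy)
      · exact contDiffAt_id.congr_of_eventuallyEq
          (by filter_upwards [eventually_gt_nhds h] with y hy using abs_of_pos hy)
    exact ((habs.rpow_const_of_ne (abs_ne_zero.mpr hx0))).contDiffWithinAt
  exact (ofReal_contDiffOn h1).mul (dunkl_contDiffOn hg)

lemma deriv_combo {ι : Type} (s : Finset ι) (c : ι → ℂ) (g : ι → ℝ → ℂ)
    (hg : ∀ i ∈ s, ContDiffOn ℝ (⊤:ℕ∞) (g i) {(0:ℝ)}ᶜ) {x : ℝ} (hx : x ≠ 0) :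
    deriv (fun y => ∑ i ∈ s, c i * g i y) x = ∑ i ∈ s, c i * deriv (g i) x := by
  rw [deriv_fun_sum (fun i hi => by
    exact (((hg i hi).contDiffAt (isOpenC.mem_nhds hx)).differentiableAt (by simp)).const_mul _)]
  exact Finset.sum_congr rfl fun i hi => deriv_const_mul_field _

lemma dunkl_combo {ι : Type} (k : ℝ) (s : Finset ι) (c : ι → ℂ) (g : ι → ℝ → ℂ)
    (hg : ∀ i ∈ s, ContDiffOn ℝ (⊤:ℕ∞) (g i) {(0:ℝ)}ᶜ) {x : ℝ} (hx : x ≠ 0) :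
    dunkl k (fun y => ∑ i ∈ s, c i * g i y) x = ∑ i ∈ s, c i * dunkl k (g i) x := by
  have hx' : x ∈ ({(0:ℝ)}ᶜ : Set ℝ) := hx
  have hB : deriv (fun y => ∑ i ∈ s, c i * g i y) x = ∑ i ∈ s, c i * deriv (g i) x :=
    deriv_combo s c g hg hx
  have hev : deriv (fun y => ∑ i ∈ s, c i * g i y)
      =ᶠ[nhds x] fun y => ∑ i ∈ s, c i * deriv (g i) y := by
    filter_upwards [isOpenC.mem_nhds hx'] with y hy
    exact deriv_combo s c g hg hy
  have hA : deriv (deriv (fun y => ∑ i ∈ s, c i * g i y)) x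
      = ∑ i ∈ s, c i * deriv (deriv (g i)) x := by
    rw [hev.deriv_eq, deriv_fun_sum (fun i hi => by
      exact ((((hg i hi).deriv_of_isOpen isOpenC einf).contDiffAt
        (isOpenC.mem_nhds hx')).differentiableAt (by simp)).const_mul _)]
    exact Finset.sum_congr rfl fun i hi => deriv_const_mul_field _
  unfold dunkl
  rw [hA, hB]
  rw [Finset.sum_congr rfl (fun i (hi : i ∈ s) =>
    show c i * (deriv (deriv (g i)) x + ((2*k/x:ℝ):ℂ) * deriv (g i) x
        - (k:ℂ) * (g i x - g i (-x)) / (x:ℂ)^2)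
      = (c i * deriv (deriv (g i)) x + ((2*k/x:ℝ):ℂ) * (c i * deriv (g i) x))
        - (k:ℂ) * (c i * g i x - c i * g i (-x)) / (x:ℂ)^2 from by ring)]
  rw [Finset.sum_sub_distrib, Finset.sum_add_distrib, ← Finset.mul_sum]
  congr 1
  rw [← Finset.sum_div, ← Finset.mul_sum, ← Finset.sum_sub_distrib]

lemma Lop_combo {ι : Type} (k : ℝ) (n : ℕ) (s : Finset ι) (c : ι → ℂ) (g : ι → ℝ → ℂ)
    (hg : ∀ i ∈ s, ContDiffOn ℝ (⊤:ℕ∞) (g i) {(0:ℝ)}ᶜ) {x : ℝ} (hx : x ≠ 0) :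
    Lop k n (fun y => ∑ i ∈ s, c i * g i y) x = ∑ i ∈ s, c i * Lop k n (g i) x := by
  unfold Lop
  rw [dunkl_combo k s c g hg hx, Finset.mul_sum]
  exact Finset.sum_congr rfl fun i hi => by ring

lemma Lop_iter_combo {ι : Type} (k : ℝ) (n : ℕ) (β : ℕ) (s : Finset ι) (c : ι → ℂ) :
    ∀ (g : ι → ℝ → ℂ), (∀ i ∈ s, ContDiffOn ℝ (⊤:ℕ∞) (g i) {(0:ℝ)}ᶜ) →
    ∀ x : ℝ, x ≠ 0 →
    (Lop k n)^[β] (fun y => ∑ i ∈ s, c i * g i y) x = ∑ i ∈ s, c i * (Lop k n)^[β] (g i) x := by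
  induction β with
  | zero => intro g hg x hx; simp
  | succ β ih =>
    intro g hg x hx
    rw [Function.iterate_succ_apply]
    have h1 : Set.EqOn (Lop k n (fun y => ∑ i ∈ s, c i * g i y))
        (fun y => ∑ i ∈ s, c i * Lop k n (g i) y) {(0:ℝ)}ᶜ :=
      fun y hy => Lop_combo k n s c g hg (hy : y ≠ 0)
    rw [Lop_iter_congr isOpenC negmem β h1 (hx : x ∈ ({(0:ℝ)}ᶜ : Set ℝ))]
    rw [ih (fun i => Lop k n (g i)) (fun i hi => Lop_contDiffOn (hg i hi)) x hx]
    exact Finset.sum_congr rfl fun i hi => by rw [Function.iterate_succ_apply]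

lemma nLop_eq (k : ℝ) (n : ℕ) (g : ℝ → ℂ) :
    nLop k n g = fun x => (n : ℂ) * Lop k n g x := by
  funext x; unfold nLop Lop; push_cast; ring

lemma nLop_iter (k : ℝ) (n : ℕ) (β : ℕ) (g : ℝ → ℂ) (x : ℝ) :
    (nLop k n)^[β] g x = (n : ℂ) ^ β * (Lop k n)^[β] g x := by
  induction β generalizing g x with
  | zero => simp
  | succ β ih =>
    rw [Function.iterate_succ_apply, ih, nLop_eq, Lop_iter_const_mul,
      ← Function.iterate_succ_apply]
    ring

lemma Pnorm_lt_top_iff (k : ℝ) (n : ℕ) (α β : ℕ) (g : ℝ → ℂ) :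
    Pnorm k n α β g < ⊤ ↔ ∃ C : ℝ, ∀ x : ℝ, x ≠ 0 →
      ‖((((n : ℝ) * |x| ^ (2 / (n : ℝ))) ^ α : ℝ) : ℂ) * (nLop k n)^[β] g x‖ ≤ C := by
  constructor
  · intro h
    rw [Pnorm, iSup_lt_iff] at h
    obtain ⟨b, hb, hle⟩ := h
    refine ⟨b.toReal, fun x hx => ?_⟩
    have h2 := hle ⟨x, hx⟩
    have h3 : (‖((((n : ℝ) * |x| ^ (2 / (n : ℝ))) ^ α : ℝ) : ℂ) *
        (nLop k n)^[β] g x‖₊ : ℝ≥0∞).toReal ≤ b.toReal :=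
      ENNReal.toReal_mono hb.ne h2
    simpa using h3
  · rintro ⟨C, hC⟩
    refine lt_of_le_of_lt (iSup_le (a := ENNReal.ofReal C) fun x => ?_) ENNReal.ofReal_lt_top
    rw [← enorm_eq_nnnorm, ← ofReal_norm]
    exact ENNReal.ofReal_le_ofReal (hC x.1 x.2)

lemma stirling2_eq_zero : ∀ m j : ℕ, m < j → stirling2 m j = 0 := by
  intro m
  induction m with
  | zero => intro j hj; match j, hj with | j+1, _ => rfl
  | succ m ih =>
    intro j hj
    match j, hj with
    | j+1, hj =>
      show (j+1) * stirling2 m (j+1) + stirling2 m j = 0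
      rw [ih (j+1) (by omega), ih j (by omega)]; ring

lemma stirling2_diag (m : ℕ) : stirling2 m m = 1 := by
  induction m with
  | zero => rfl
  | succ m ih =>
    show (m+1) * stirling2 m (m+1) + stirling2 m m = 1
    rw [stirling2_eq_zero m (m+1) (by omega), ih]; ring

/-- The coefficient of `x^j f^{(j)}(x)` in `f_m`. -/
def Acoef (k : ℝ) (n : ℕ) (m j : ℕ) : ℝ :=
  ∑ ℓ ∈ Finset.range (m + 1), if j ≤ ℓ then
    (m.choose ℓ : ℝ) * (k * n + 1 - (n : ℝ) / 2) ^ (m - ℓ) * (n : ℝ) ^ ℓ *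
      (stirling2 ℓ j : ℝ) else 0

lemma fseq_eq (k : ℝ) (n : ℕ) (f : ℝ → ℂ) (m : ℕ) (x : ℝ) :
    fseq k n f m x = ∑ j ∈ Finset.range (m + 1),
      ((Acoef k n m j : ℝ) : ℂ) * ((x : ℂ) ^ j * iteratedDeriv j f x) := by
  unfold fseq
  have h1 : ∀ ℓ ∈ Finset.range (m+1),
      (∑ j ∈ Finset.range (ℓ + 1),
        (((m.choose ℓ : ℝ) * (k * n + 1 - (n : ℝ) / 2) ^ (m - ℓ) * (n : ℝ) ^ ℓ *
          (stirling2 ℓ j : ℝ) : ℝ) : ℂ) * (x : ℂ) ^ j * iteratedDeriv j f x)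
      = ∑ j ∈ Finset.range (m+1), (if j ≤ ℓ then
        (((m.choose ℓ : ℝ) * (k * n + 1 - (n : ℝ) / 2) ^ (m - ℓ) * (n : ℝ) ^ ℓ *
          (stirling2 ℓ j : ℝ) : ℝ) : ℂ) * (x : ℂ) ^ j * iteratedDeriv j f x else 0) := by
    intro ℓ hℓ
    rw [← Finset.sum_filter]
    congr 1
    ext j
    simp only [Finset.mem_filter, Finset.mem_range, Nat.lt_succ_iff] at *
    omega
  rw [Finset.sum_congr rfl h1, Finset.sum_comm]
  refine Finset.sum_congr rfl fun j hj => ?_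
  rw [Acoef, Complex.ofReal_sum, Finset.sum_mul]
  refine Finset.sum_congr rfl fun ℓ hℓ => ?_
  split_ifs with h
  · ring
  · simp

lemma Acoef_diag (k : ℝ) (n : ℕ) (m : ℕ) : Acoef k n m m = (n:ℝ)^m := by
  unfold Acoef
  rw [Finset.sum_eq_single_of_mem m (Finset.self_mem_range_succ m)
    (fun ℓ hℓ hne => if_neg (by simp at hℓ; omega))]
  rw [if_pos le_rfl, Nat.choose_self, stirling2_diag]
  simp

lemma gmem (k : ℝ) (n : ℕ) (hn : 1 ≤ n) (f : ℝ → ℂ) (m : ℕ) :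
    (fun x : ℝ => (x:ℂ)^m * iteratedDeriv m f x)
      ∈ Submodule.span ℝ (Set.range (fseq k n f)) := by
  induction m using Nat.strong_induction_on with
  | _ m ih =>
  have hnn : (0:ℝ) < (n:ℝ) := by exact_mod_cast hn
  have hn0 : ((n:ℝ)^m : ℝ) ≠ 0 := pow_ne_zero _ (ne_of_gt hnn)
  have key : (fun x : ℝ => (x:ℂ)^m * iteratedDeriv m f x)
      = ((n:ℝ)^m)⁻¹ • (fseq k n f m - ∑ j ∈ Finset.range m,
          Acoef k n m j • (fun x : ℝ => (x:ℂ)^j * iteratedDeriv j f x)) := by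
    funext x
    have h1 := fseq_eq k n f m x
    rw [Finset.sum_range_succ, Acoef_diag] at h1
    simp only [Pi.smul_apply, Pi.sub_apply, Finset.sum_apply, Complex.real_smul]
    rw [h1]
    push_cast
    have hnc : ((n:ℂ)^m : ℂ) ≠ 0 := by
      exact_mod_cast Complex.ofReal_ne_zero.mpr hn0
    field_simp
    ring
  rw [key]
  exact Submodule.smul_mem _ _ (Submodule.sub_mem _ (Submodule.subset_span ⟨m, rfl⟩)
    (Submodule.sum_mem _ fun j hj =>
      Submodule.smul_mem _ _ (ih j (Finset.mem_range.mp hj))))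

lemma iterDeriv_smooth {f : ℝ → ℂ} (hf : ContDiffOn ℝ (⊤:ℕ∞) f {(0:ℝ)}ᶜ) (j : ℕ) :
    ContDiffOn ℝ (⊤:ℕ∞) (iteratedDeriv j f) {(0:ℝ)}ᶜ := by
  induction j with
  | zero => simpa [iteratedDeriv_zero] using hf
  | succ j ih => rw [iteratedDeriv_succ]; exact ih.deriv_of_isOpen isOpenC einf

lemma gj_smooth {f : ℝ → ℂ} (hf : ContDiffOn ℝ (⊤:ℕ∞) f {(0:ℝ)}ᶜ) (j : ℕ) :
    ContDiffOn ℝ (⊤:ℕ∞) (fun t : ℝ => (t:ℂ)^j * iteratedDeriv j f t) {(0:ℝ)}ᶜ :=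
  ((ofReal_contDiffOn contDiffOn_id).pow j).mul (iterDeriv_smooth hf j)

lemma fseq_smooth (k : ℝ) (n : ℕ) {f : ℝ → ℂ} (hf : ContDiffOn ℝ (⊤:ℕ∞) f {(0:ℝ)}ᶜ)
    (m : ℕ) : ContDiffOn ℝ (⊤:ℕ∞) (fseq k n f m) {(0:ℝ)}ᶜ := by
  have h : fseq k n f m = fun y : ℝ => ∑ j ∈ Finset.range (m+1),
      ((Acoef k n m j : ℝ) : ℂ) * ((y:ℂ)^j * iteratedDeriv j f y) :=
    funext (fseq_eq k n f m)
  rw [h]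
  exact ContDiffOn.sum fun j hj => contDiffOn_const.mul (gj_smooth hf j)

/-- Characterization of `S_{k,n}(ℝ)` via the seminorms of the functions `f_m`. -/
theorem memSkn_iff_Pnorm_fseq (n : ℕ) (hn : 1 ≤ n) (k : ℝ) (hk : 0 ≤ k)
    (f : ℝ → ℂ) (hf : ContDiffOn ℝ (⊤ : ℕ∞) f {(0 : ℝ)}ᶜ) :
    memSkn k n f ↔ ∀ α β m : ℕ, Pnorm k n α β (fseq k n f m) < ⊤ := by
  have hf' : ContDiffOn ℝ (⊤:ℕ∞) f {(0:ℝ)}ᶜ := hf.of_le (by simp)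
  have hone : (1:ℝ) ≤ (n:ℝ) := by exact_mod_cast hn
  constructor
  · rintro ⟨-, hb⟩ α β m
    rw [Pnorm_lt_top_iff]
    choose C hC using hb
    refine ⟨(n:ℝ)^(α+β) * ∑ j ∈ Finset.range (m+1), |Acoef k n m j| * C α β j,
      fun x hx => ?_⟩
    have hfe : fseq k n f m = fun y : ℝ => ∑ j ∈ Finset.range (m+1),
        ((Acoef k n m j : ℝ) : ℂ) * ((y:ℂ)^j * iteratedDeriv j f y) :=
      funext (fseq_eq k n f m)
    have hL : (Lop k n)^[β] (fseq k n f m) x = ∑ j ∈ Finset.range (m+1),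
        ((Acoef k n m j : ℝ) : ℂ) *
          (Lop k n)^[β] (fun t : ℝ => (t:ℂ)^j * iteratedDeriv j f t) x := by
      rw [hfe]
      exact Lop_iter_combo k n β (Finset.range (m+1)) (fun j => ((Acoef k n m j : ℝ) : ℂ))
        (fun j => fun t : ℝ => (t:ℂ)^j * iteratedDeriv j f t)
        (fun j hj => gj_smooth hf' j) x hx
    have e1 : ((((n : ℝ) * |x| ^ (2 / (n : ℝ))) ^ α : ℝ) : ℂ) *
        (nLop k n)^[β] (fseq k n f m) x
        = (n:ℂ)^(α+β) * ∑ j ∈ Finset.range (m+1), ((Acoef k n m j : ℝ) : ℂ) *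
          ((((|x| ^ (2 / (n : ℝ)) : ℝ) ^ α : ℝ) : ℂ) *
            (Lop k n)^[β] (fun t : ℝ => (t:ℂ)^j * iteratedDeriv j f t) x) := by
      rw [nLop_iter, hL]
      simp only [Finset.mul_sum]
      push_cast
      refine Finset.sum_congr rfl fun j hj => by ring
    rw [e1, norm_mul, norm_pow, Complex.norm_natCast]
    refine mul_le_mul_of_nonneg_left (le_trans (norm_sum_le _ _)
      (Finset.sum_le_sum fun j hj => ?_)) (by positivity)
    rw [norm_mul, Complex.norm_real, Real.norm_eq_abs]
    exact mul_le_mul_of_nonneg_left (hC α β j x hx) (abs_nonneg _)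
  · intro hP
    refine ⟨hf, fun α β ℓ => ?_⟩
    have hsp := gmem k n hn f ℓ
    rw [Finsupp.mem_span_range_iff_exists_finsupp] at hsp
    obtain ⟨c, hc⟩ := hsp
    choose C hC using fun i => (Pnorm_lt_top_iff k n α β (fseq k n f i)).mp (hP α β i)
    refine ⟨∑ i ∈ c.support, |c i| * C i, fun x hx => ?_⟩
    have hgl : (fun t : ℝ => (t : ℂ) ^ ℓ * iteratedDeriv ℓ f t)
        = fun y : ℝ => ∑ i ∈ c.support, ((c i : ℝ) : ℂ) * fseq k n f i y := by
      rw [← hc]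
      funext y
      rw [Finsupp.sum, Finset.sum_apply]
      exact Finset.sum_congr rfl fun i hi => Complex.real_smul
    have hL : (Lop k n)^[β] (fun y : ℝ => ∑ i ∈ c.support, ((c i : ℝ) : ℂ) * fseq k n f i y) x
        = ∑ i ∈ c.support, ((c i : ℝ) : ℂ) * (Lop k n)^[β] (fseq k n f i) x :=
      Lop_iter_combo k n β c.support (fun i => ((c i : ℝ) : ℂ)) (fun i => fseq k n f i)
        (fun i _ => fseq_smooth k n hf' i) x hx
    rw [hgl, hL, Finset.mul_sum]
    refine le_trans (norm_sum_le _ _) (Finset.sum_le_sum fun i _ => ?_)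
    have h3 : ‖(((|x| ^ (2 / (n : ℝ)) : ℝ) ^ α : ℝ) : ℂ) *
        (Lop k n)^[β] (fseq k n f i) x‖ ≤ C i := by
      have e2 : ((((n : ℝ) * |x| ^ (2 / (n : ℝ))) ^ α : ℝ) : ℂ) *
          (nLop k n)^[β] (fseq k n f i) x
          = (n:ℂ)^(α+β) * ((((|x| ^ (2 / (n : ℝ)) : ℝ) ^ α : ℝ) : ℂ) *
            (Lop k n)^[β] (fseq k n f i) x) := by
        rw [nLop_iter]; push_cast; ring
      have h4 := hC i x hx
      rw [e2, norm_mul, norm_pow, Complex.norm_natCast] at h4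
      exact le_trans (le_mul_of_one_le_left (norm_nonneg _)
        (one_le_pow₀ hone)) h4
    have e3 : (((|x| ^ (2 / (n : ℝ)) : ℝ) ^ α : ℝ) : ℂ) *
        (((c i : ℝ) : ℂ) * (Lop k n)^[β] (fseq k n f i) x)
        = ((c i : ℝ) : ℂ) * ((((|x| ^ (2 / (n : ℝ)) : ℝ) ^ α : ℝ) : ℂ) *
          (Lop k n)^[β] (fseq k n f i) x) := by ring
    rw [e3, norm_mul, Complex.norm_real, Real.norm_eq_abs]
    exact mul_le_mul_of_nonneg_left h3 (abs_nonneg _)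

end
end

section
/- Let n ∈ ℕ with n ≥ 1 and k ∈ ℝ with k ≥ 0. For every f ∈ C^∞(ℝ∖{0}) and every x ∈ ℝ∖{0}, one has the commutator identity n|x|^{2−2/n} Δ_k( n|x|^{2/n} f(x) ) − n|x|^{2/n} · ( n|x|^{2−2/n} (Δ_k f)(x) ) = 4 (H_{k,n} f)(x), where the first Dunkl Laplacian acts on the function x ↦ n|x|^{2/n} f(x). -/
open MeasureTheory Real
open scoped ENNReal NNReal

noncomputable section

lemma myHasDerivAt_abs_rpow (a : ℝ) {t : ℝ} (ht : t ≠ 0) :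
    HasDerivAt (fun s : ℝ => |s| ^ a) (a * |t| ^ a / t) t := by
  rcases ht.lt_or_gt with h | h
  · have h1 : HasDerivAt (fun s : ℝ => (-s) ^ a) (a * (-t) ^ (a - 1) * (-1)) t :=
      (Real.hasDerivAt_rpow_const (p := a) (Or.inl (neg_ne_zero.mpr ht))).comp t (hasDerivAt_neg t)
    have h2 : (fun s : ℝ => |s| ^ a) =ᶠ[nhds t] fun s : ℝ => (-s) ^ a := by
      filter_upwards [Iio_mem_nhds h] with s hs
      rw [abs_of_neg hs]
    have h3 : a * (-t) ^ (a - 1) * (-1) = a * |t| ^ a / t := by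
      rw [abs_of_neg h, Real.rpow_sub (by linarith), Real.rpow_one]
      field_simp
    exact h3 ▸ h1.congr_of_eventuallyEq h2
  · have h1 : HasDerivAt (fun s : ℝ => s ^ a) (a * t ^ (a - 1)) t := by
      simpa [mul_comm] using Real.hasDerivAt_rpow_const (p := a) (Or.inl ht)
    have h2 : (fun s : ℝ => |s| ^ a) =ᶠ[nhds t] fun s : ℝ => s ^ a := by
      filter_upwards [Ioi_mem_nhds h] with s hs
      rw [abs_of_pos hs]
    have h3 : a * t ^ (a - 1) = a * |t| ^ a / t := by
      rw [abs_of_pos h, Real.rpow_sub h, Real.rpow_one]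
      ring
    exact h3 ▸ h1.congr_of_eventuallyEq h2

lemma key (N K X A F F1 F2 Fm : ℂ) (hX : X ≠ 0) (hN : N ≠ 0) (hA : A ≠ 0) :
    N * (X ^ 2 / A) * (N * (2 / N) * ((2 / N) - 1) * A / X ^ 2 * F + N * (2 / N) * A / X * F1
        + (N * (2 / N) * A / X * F1 + N * A * F2)
      + 2 * K / X * (N * (2 / N) * A / X * F + N * A * F1)
      - K * (N * A * F - N * A * Fm) / X ^ 2)
    - N * A * (N * (X ^ 2 / A) * (F2 + 2 * K / X * F1 - K * (F - Fm) / X ^ 2))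
    = 4 * (N * X * F1 + (K * N + 1 - N / 2) * F) := by
  have e1 : N * (X ^ 2 / A) * (N * (2 / N) * ((2 / N) - 1) * A / X ^ 2 * F + N * (2 / N) * A / X * F1
        + (N * (2 / N) * A / X * F1 + N * A * F2)
      + 2 * K / X * (N * (2 / N) * A / X * F + N * A * F1)
      - K * (N * A * F - N * A * Fm) / X ^ 2)
    - N * A * (N * (X ^ 2 / A) * (F2 + 2 * K / X * F1 - K * (F - Fm) / X ^ 2))
    = N * (X ^ 2 / A) * (N * (2 / N) * ((2 / N) - 1) * A / X ^ 2 * F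
        + 2 * (N * (2 / N) * A / X) * F1 + 2 * K / X * (N * (2 / N) * A / X) * F) := by
    ring
  rw [e1]
  field_simp
  ring

set_option maxHeartbeats 1600000 in
/-- The commutator identity `[n|x|^{2-2/n} Δ_k, n|x|^{2/n} I] f = 4 H_{k,n} f`. -/
theorem nLop_commutator (n : ℕ) (hn : 1 ≤ n) (k : ℝ) (hk : 0 ≤ k)
    (f : ℝ → ℂ) (hf : ContDiffOn ℝ (⊤ : ℕ∞) f {(0 : ℝ)}ᶜ) (x : ℝ) (hx : x ≠ 0) :
    nLop k n (fun t : ℝ => (((n : ℝ) * |t| ^ (2 / (n : ℝ)) : ℝ) : ℂ) * f t) x -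
        (((n : ℝ) * |x| ^ (2 / (n : ℝ)) : ℝ) : ℂ) * nLop k n f x =
      4 * Hop k n f x := by
  have hn0 : (n : ℝ) ≠ 0 := Nat.cast_ne_zero.mpr (by omega)
  set a : ℝ := 2 / (n : ℝ) with ha
  -- basic differentiability of f
  have hopen : IsOpen ({(0:ℝ)}ᶜ) := isOpen_compl_singleton
  have hfd : ∀ t : ℝ, t ≠ 0 → HasDerivAt f (deriv f t) t := fun t ht =>
    (((hf.contDiffAt (hopen.mem_nhds ht)).differentiableAt (by simp))).hasDerivAt
  have hfd' : HasDerivAt (deriv f) (deriv (deriv f) x) x := by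
    have : ContDiffOn ℝ (⊤ : ℕ∞) (deriv f) ({(0:ℝ)}ᶜ) :=
      hf.deriv_of_isOpen hopen (by simp)
    exact ((this.contDiffAt (hopen.mem_nhds hx)).differentiableAt (by simp)).hasDerivAt
  -- weight functions
  have hw : ∀ t : ℝ, t ≠ 0 →
      HasDerivAt (fun s : ℝ => (n : ℝ) * |s| ^ a) ((n : ℝ) * a * |t| ^ a / t) t := by
    intro t ht
    have h := (myHasDerivAt_abs_rpow a ht).const_mul (n : ℝ)
    have h3 : (n : ℝ) * (a * |t| ^ a / t) = (n : ℝ) * a * |t| ^ a / t := by ring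
    exact h3 ▸ h
  have hw1 : HasDerivAt (fun t : ℝ => (n : ℝ) * a * |t| ^ a / t)
      ((n : ℝ) * a * (a - 1) * |x| ^ a / x ^ 2) x := by
    have h := ((myHasDerivAt_abs_rpow a hx).const_mul ((n : ℝ) * a)).div (hasDerivAt_id x) hx
    have h3 : ((n : ℝ) * a * (a * |x| ^ a / x) * x - (n : ℝ) * a * |x| ^ a * 1) / x ^ 2
        = (n : ℝ) * a * (a - 1) * |x| ^ a / x ^ 2 := by
      field_simp
    exact h3 ▸ h
  -- derivative of g
  set G : ℝ → ℂ := fun t =>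
    (((n : ℝ) * a * |t| ^ a / t : ℝ) : ℂ) * f t + (((n : ℝ) * |t| ^ a : ℝ) : ℂ) * deriv f t
    with hG
  have hg : ∀ t : ℝ, t ≠ 0 →
      HasDerivAt (fun t : ℝ => (((n : ℝ) * |t| ^ a : ℝ) : ℂ) * f t) (G t) t := fun t ht =>
    ((hw t ht).ofReal_comp).mul (hfd t ht)
  have hgx : deriv (fun t : ℝ => (((n : ℝ) * |t| ^ a : ℝ) : ℂ) * f t) x = G x :=
    (hg x hx).deriv
  have heq : deriv (fun t : ℝ => (((n : ℝ) * |t| ^ a : ℝ) : ℂ) * f t) =ᶠ[nhds x] G := by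
    filter_upwards [compl_singleton_mem_nhds hx] with t ht
    exact (hg t ht).deriv
  have hG' : HasDerivAt G
      ((((n : ℝ) * a * (a - 1) * |x| ^ a / x ^ 2 : ℝ) : ℂ) * f x
        + (((n : ℝ) * a * |x| ^ a / x : ℝ) : ℂ) * deriv f x
        + ((((n : ℝ) * a * |x| ^ a / x : ℝ) : ℂ) * deriv f x
          + (((n : ℝ) * |x| ^ a : ℝ) : ℂ) * deriv (deriv f) x)) x :=
    ((hw1.ofReal_comp).mul (hfd x hx)).add (((hw x hx).ofReal_comp).mul hfd')
  have hg2 : deriv (deriv (fun t : ℝ => (((n : ℝ) * |t| ^ a : ℝ) : ℂ) * f t)) x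
      = (((n : ℝ) * a * (a - 1) * |x| ^ a / x ^ 2 : ℝ) : ℂ) * f x
        + (((n : ℝ) * a * |x| ^ a / x : ℝ) : ℂ) * deriv f x
        + ((((n : ℝ) * a * |x| ^ a / x : ℝ) : ℂ) * deriv f x
          + (((n : ℝ) * |x| ^ a : ℝ) : ℂ) * deriv (deriv f) x) := by
    rw [heq.deriv_eq]
    exact hG'.deriv
  -- now compute
  have habs : |x| ≠ 0 := abs_ne_zero.mpr hx
  have hA0 : |x| ^ a ≠ 0 := (Real.rpow_pos_of_pos (abs_pos.mpr hx) a).ne'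
  have hBr : |x| ^ (2 - a) * |x| ^ a = x ^ 2 := by
    rw [← Real.rpow_add (abs_pos.mpr hx)]
    norm_num
  have hB : ((|x| ^ (2 - a) : ℝ) : ℂ) = (x : ℂ) ^ 2 / ((|x| ^ a : ℝ) : ℂ) := by
    rw [eq_div_iff (by exact_mod_cast hA0)]
    exact_mod_cast congrArg Complex.ofReal hBr
  simp only [nLop, dunkl, Hop, hg2, hgx, hG]
  rw [abs_neg]
  push_cast
  rw [hB, ha]
  have hxc : (x : ℂ) ≠ 0 := by exact_mod_cast hx
  have hAc : ((|x| ^ a : ℝ) : ℂ) ≠ 0 := by exact_mod_cast hA0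
  have hnc : (n : ℂ) ≠ 0 := Nat.cast_ne_zero.mpr (by omega)
  rw [ha] at hAc
  push_cast
  linear_combination key (n:ℂ) (k:ℂ) (x:ℂ) (((|x| ^ (2/(n:ℝ)) : ℝ)):ℂ) (f x) (deriv f x)
    (deriv (deriv f) x) (f (-x)) hxc hnc hAc

end
end
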